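/- arXiv:2012.10164 — 2 statements merged into one kernel-verified Lean document; each statement's English description precedes it below -/
import Mathlib

section
/- (Refined Kato inequality, algebraic form) Let n ≥ 2 and let A be a symmetric n×n real matrix with trace zero, and let v be a unit vector in ℝⁿ. Then |A v|² ≤ ((n-1)/n) |A|², where |A|² is the sum of squares of entries of A. Equivalently, (n/(n-1)) |A v|² ≤ |A|². -/
/-!
Diagonalize `A` in an orthonormal eigenbasis `e_k` with eigenvalues `λ_k`. Then
`|A v|² = ∑ λ_k² ⟨e_k, v⟩²` is a convex combination of the `λ_k²`, while `|A|² = ∑ λ_k²`.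
Since `∑ λ_k = tr A = 0`, each `λ_k = -∑_{i ≠ k} λ_i`, so Cauchy–Schwarz gives
`λ_k² ≤ (n - 1) (|A|² - λ_k²)`, i.e. `λ_k² ≤ ((n - 1) / n) |A|²`.
-/

open Finset Matrix
open scoped RealInnerProductSpace

theorem card_mul_sq_le_of_sum_eq_zero {ι : Type*} [Fintype ι] [DecidableEq ι] {x : ι → ℝ}
    (hx : ∑ i, x i = 0) (k : ι) :
    Fintype.card ι * x k ^ 2 ≤ (Fintype.card ι - 1) * ∑ i, x i ^ 2 := by
  have hsplit : ∀ f : ι → ℝ, ∑ i, f i = f k + ∑ i ∈ univ.erase k, f i := fun f =>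
    (add_sum_erase _ _ (mem_univ k)).symm
  have hcard : ((univ.erase k).card : ℝ) = Fintype.card ι - 1 := by
    rw [card_erase_of_mem (mem_univ k), Nat.cast_sub (card_pos.mpr ⟨k, mem_univ k⟩)]
    simp
  have hxk : x k = -∑ i ∈ univ.erase k, x i := by
    rw [hsplit] at hx
    linarith
  have hcs := sq_sum_le_card_mul_sum_sq (s := univ.erase k) (f := x)
  rw [hcard, ← neg_sq, ← hxk] at hcs
  rw [hsplit (fun i => x i ^ 2)]
  nlinarith

namespace LinearMap.IsSymmetric

variable {E : Type*} [NormedAddCommGroup E] [InnerProductSpace ℝ E] [FiniteDimensional ℝ E]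
  {T : E →ₗ[ℝ] E} {n : ℕ}

theorem norm_sq_apply_eq_sum_eigenvalues (hT : T.IsSymmetric) (hn : Module.finrank ℝ E = n)
    (x : E) :
    ‖T x‖ ^ 2 = ∑ k, hT.eigenvalues hn k ^ 2 * ⟪hT.eigenvectorBasis hn k, x⟫ ^ 2 := by
  rw [← (hT.eigenvectorBasis hn).sum_sq_inner_right]
  refine sum_congr rfl fun k _ => ?_
  rw [← hT, apply_eigenvectorBasis, RCLike.ofReal_real_eq_id, id_eq, real_inner_smul_left,
    mul_pow]

theorem sum_norm_sq_apply_eq_sum_sq_eigenvalues (hT : T.IsSymmetric)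
    (hn : Module.finrank ℝ E = n) {ι : Type*} [Fintype ι] (b : OrthonormalBasis ι ℝ E) :
    ∑ i, ‖T (b i)‖ ^ 2 = ∑ k, hT.eigenvalues hn k ^ 2 := by
  simp_rw [hT.norm_sq_apply_eq_sum_eigenvalues hn, sum_comm (γ := ι), ← mul_sum,
    b.sum_sq_inner_left, (hT.eigenvectorBasis hn).orthonormal.1, one_pow, mul_one]

theorem mul_norm_sq_apply_le_of_trace_eq_zero (hT : T.IsSymmetric)
    (hn : Module.finrank ℝ E = n) (htrace : LinearMap.trace ℝ E T = 0) {ι : Type*} [Fintype ι]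
    (b : OrthonormalBasis ι ℝ E) (x : E) :
    n * ‖T x‖ ^ 2 ≤ (n - 1) * (∑ i, ‖T (b i)‖ ^ 2) * ‖x‖ ^ 2 := by
  have hsum : ∑ k, hT.eigenvalues hn k = 0 := by
    simpa [hT.trace_eq_sum_eigenvalues hn] using htrace
  have hbound := card_mul_sq_le_of_sum_eq_zero hsum
  rw [Fintype.card_fin] at hbound
  rw [hT.norm_sq_apply_eq_sum_eigenvalues hn, hT.sum_norm_sq_apply_eq_sum_sq_eigenvalues hn b,
    ← (hT.eigenvectorBasis hn).sum_sq_inner_right, mul_sum, mul_sum]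
  refine sum_le_sum fun k _ => ?_
  rw [← mul_assoc]
  exact mul_le_mul_of_nonneg_right (hbound k) (sq_nonneg _)

end LinearMap.IsSymmetric

theorem Matrix.IsSymm.card_mul_sum_sq_mulVec_le_of_trace_eq_zero {ι : Type*} [Fintype ι]
    [DecidableEq ι] {A : Matrix ι ι ℝ} (hA : A.IsSymm) (htrace : A.trace = 0) (v : ι → ℝ) :
    Fintype.card ι * ∑ i, (A *ᵥ v) i ^ 2 ≤
      (Fintype.card ι - 1) * (∑ i, ∑ j, A i j ^ 2) * ∑ i, v i ^ 2 := by
  have hT : (toEuclideanLin A).IsSymmetric :=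
    isSymmetric_toEuclideanLin_iff.mpr (isHermitian_iff_isSymm.mpr hA)
  have h := hT.mul_norm_sq_apply_le_of_trace_eq_zero finrank_euclideanSpace
    (by simpa [toLpLin_eq_toLin] using htrace) (EuclideanSpace.basisFun ι ℝ) (WithLp.toLp 2 v)
  have hcolumns :
      ∑ j, ‖toEuclideanLin A (EuclideanSpace.basisFun ι ℝ j)‖ ^ 2 = ∑ i, ∑ j, A i j ^ 2 := by
    simpa [EuclideanSpace.real_norm_sq_eq, toLpLin_apply] using sum_comm
  rw [hcolumns] at h
  simpa [EuclideanSpace.real_norm_sq_eq, toLpLin_apply] using h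

/-- Refined Kato inequality, algebraic form: for a trace-free symmetric `n × n`
real matrix `A` and a unit vector `v`, one has `|A v|² ≤ ((n-1)/n) |A|²`, and
equivalently `(n/(n-1)) |A v|² ≤ |A|²`. -/
theorem refined_kato_algebraic (n : ℕ) (hn : 2 ≤ n) (A : Matrix (Fin n) (Fin n) ℝ)
    (hsymm : A.IsSymm) (htrace : A.trace = 0) (v : Fin n → ℝ)
    (hv : ∑ i, (v i) ^ 2 = 1) :
    (∑ i, (∑ j, A i j * v j) ^ 2 ≤ (((n : ℝ) - 1) / n) * ∑ i, ∑ j, (A i j) ^ 2) ∧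
    ((n : ℝ) / ((n : ℝ) - 1)) * ∑ i, (∑ j, A i j * v j) ^ 2 ≤ ∑ i, ∑ j, (A i j) ^ 2 := by
  have hkey : n * ∑ i, (∑ j, A i j * v j) ^ 2 ≤ (n - 1) * ∑ i, ∑ j, A i j ^ 2 := by
    simpa [hv, mulVec, dotProduct] using
      hsymm.card_mul_sum_sq_mulVec_le_of_trace_eq_zero htrace v
  have hn1 : (0 : ℝ) < n - 1 := by
    have : (2 : ℝ) ≤ n := by exact_mod_cast hn
    linarith
  constructor
  · rw [div_mul_eq_mul_div, le_div_iff₀ (by linarith)]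
    linarith
  · rw [div_mul_eq_mul_div, div_le_iff₀ hn1]
    linarith
end

section
/- Let Φ : (0,∞) → ℝ be continuously differentiable and suppose that for all 0 < s < S one has Φ'(S)/sinh(S) ≥ Φ'(s)/sinh(s). Define F(τ) = c · Φ( log( (sqrt(τ+1)+sqrt(τ-1)) / (sqrt(τ+1)-sqrt(τ-1)) ) ) for τ ∈ (1,∞), with c > 0 a constant. Then F is differentiable with F'(τ) = c (τ²-1)^{-1/2} Φ'( log( (sqrt(τ+1)+sqrt(τ-1)) / (sqrt(τ+1)-sqrt(τ-1)) ) ), and F' is nondecreasing on (1,∞); in particular F is convex on (1,∞). -/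
open Real Set

/-!
The substitution `Lvar` is `arcosh` on `[1, ∞)`: rationalising the denominator gives
`(√(τ+1) + √(τ-1)) / (√(τ+1) - √(τ-1)) = τ + √(τ² - 1)`. Hence `Lvar' τ = 1 / sinh (arcosh τ)`,
so `F' = c · (Φ' / sinh) ∘ arcosh` is the composite of two monotone maps, and a function with
monotone derivative on an open interval is convex.
-/

/-- The change of variable `s = log((√(τ+1)+√(τ-1))/(√(τ+1)-√(τ-1)))`. -/
noncomputable def Lvar (τ : ℝ) : ℝ :=
  Real.log ((Real.sqrt (τ + 1) + Real.sqrt (τ - 1)) /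
    (Real.sqrt (τ + 1) - Real.sqrt (τ - 1)))

theorem Lvar_eq_arcosh {τ : ℝ} (hτ : 1 ≤ τ) : Lvar τ = arcosh τ := by
  have hsub : 0 ≤ τ - 1 := by linarith
  have hadd : 0 ≤ τ + 1 := by linarith
  have hden : 0 < √(τ + 1) - √(τ - 1) := sub_pos.2 (sqrt_lt_sqrt hsub (by linarith))
  have hprod : √(τ + 1) * √(τ - 1) = √(τ ^ 2 - 1) := by
    rw [← sqrt_mul hadd]; ring_nf
  rw [Lvar, arcosh]
  congr 1
  rw [div_eq_iff hden.ne', ← hprod]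
  linear_combination (-√(τ - 1)) * sq_sqrt hadd + √(τ + 1) * sq_sqrt hsub

theorem rpow_neg_half_eq_inv_sqrt {x : ℝ} (hx : 0 ≤ x) : x ^ (-(1 / 2 : ℝ)) = (√x)⁻¹ := by
  rw [rpow_neg hx, sqrt_eq_rpow]

theorem hasDerivAt_Lvar {τ : ℝ} (hτ : 1 < τ) :
    HasDerivAt Lvar ((τ ^ 2 - 1) ^ (-(1 / 2 : ℝ))) τ := by
  rw [rpow_neg_half_eq_inv_sqrt (by nlinarith)]
  exact (hasDerivAt_arcosh hτ).congr_of_eventuallyEq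
    ((eventually_gt_nhds hτ).mono fun σ hσ => Lvar_eq_arcosh hσ.le)

theorem monotoneOn_rpow_neg_half_mul_comp_Lvar {g : ℝ → ℝ}
    (hg : MonotoneOn (fun s => g s / sinh s) (Ioi 0)) :
    MonotoneOn (fun τ => (τ ^ 2 - 1) ^ (-(1 / 2 : ℝ)) * g (Lvar τ)) (Ioi 1) := by
  have harcosh : MonotoneOn arcosh (Ioi 1) :=
    strictMonoOn_arcosh.monotoneOn.mono (Ioi_subset_Ioi zero_le_one)
  refine (hg.comp harcosh fun τ hτ => arcosh_pos hτ).congr fun τ hτ => ?_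
  have hτ : 1 ≤ τ := le_of_lt hτ
  rw [Function.comp_apply, sinh_arcosh hτ, Lvar_eq_arcosh hτ,
    rpow_neg_half_eq_inv_sqrt (by nlinarith), inv_mul_eq_div]

theorem convexOn_of_hasDerivAt_of_monotoneOn {D : Set ℝ} (hD : Convex ℝ D) (hDo : IsOpen D)
    {f f' : ℝ → ℝ} (hf : ∀ x ∈ D, HasDerivAt f (f' x) x) (hf' : MonotoneOn f' D) :
    ConvexOn ℝ D f := by
  refine MonotoneOn.convexOn_of_deriv hD
    (fun x hx => (hf x hx).continuousAt.continuousWithinAt) ?_ ?_ <;> rw [hDo.interior_eq]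
  · exact fun x hx => (hf x hx).differentiableAt.differentiableWithinAt
  · exact hf'.congr fun x hx => ((hf x hx).deriv).symm

theorem convexity_from_monotone_derivative_general (Φ Φ' : ℝ → ℝ) (c : ℝ) (hc : 0 < c)
    (hderiv : ∀ s : ℝ, 0 < s → HasDerivAt Φ (Φ' s) s)
    (hmono : ∀ s S : ℝ, 0 < s → s < S →
      Φ' s / Real.sinh s ≤ Φ' S / Real.sinh S) :
    (∀ τ : ℝ, 1 < τ →
      HasDerivAt (fun σ => c * Φ (Lvar σ))
        (c * (τ ^ 2 - 1) ^ (-(1 / 2 : ℝ)) * Φ' (Lvar τ)) τ) ∧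
    (∀ τ₁ τ₂ : ℝ, 1 < τ₁ → τ₁ ≤ τ₂ →
      c * (τ₁ ^ 2 - 1) ^ (-(1 / 2 : ℝ)) * Φ' (Lvar τ₁) ≤
        c * (τ₂ ^ 2 - 1) ^ (-(1 / 2 : ℝ)) * Φ' (Lvar τ₂)) ∧
    ConvexOn ℝ (Ioi (1 : ℝ)) (fun σ => c * Φ (Lvar σ)) := by
  have hF : ∀ τ : ℝ, 1 < τ → HasDerivAt (fun σ => c * Φ (Lvar σ))
      (c * (τ ^ 2 - 1) ^ (-(1 / 2 : ℝ)) * Φ' (Lvar τ)) τ := fun τ hτ =>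
    (((hderiv _ (Lvar_eq_arcosh hτ.le ▸ arcosh_pos hτ)).comp τ
      (hasDerivAt_Lvar hτ)).const_mul c).congr_deriv (by ring)
  have hratio : MonotoneOn (fun s => Φ' s / sinh s) (Ioi 0) := fun s hs S _ hsS =>
    hsS.eq_or_lt.elim (fun h => h ▸ le_rfl) (hmono s S hs)
  have hF' : MonotoneOn (fun τ => c * (τ ^ 2 - 1) ^ (-(1 / 2 : ℝ)) * Φ' (Lvar τ)) (Ioi 1) :=
    fun τ₁ h₁ τ₂ h₂ h₁₂ => by
      simpa only [mul_assoc] using mul_le_mul_of_nonneg_left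
        (monotoneOn_rpow_neg_half_mul_comp_Lvar hratio h₁ h₂ h₁₂) hc.le
  exact ⟨hF, fun τ₁ τ₂ h₁ h₁₂ => hF' h₁ (mem_Ioi.2 (h₁.trans_le h₁₂)) h₁₂,
    convexOn_of_hasDerivAt_of_monotoneOn (convex_Ioi 1) isOpen_Ioi hF hF'⟩

/-- If `Φ` is `C¹` on `(0,∞)` and `s ↦ Φ'(s)/sinh(s)` is nondecreasing, then
`F(τ) = c Φ(L(τ))` (with `L` as above) is differentiable with
`F'(τ) = c (τ²-1)^{-1/2} Φ'(L(τ))`, `F'` is nondecreasing on `(1,∞)`,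
and `F` is convex on `(1,∞)`. -/
theorem convexity_from_monotone_derivative (Φ Φ' : ℝ → ℝ) (c : ℝ) (hc : 0 < c)
    (hderiv : ∀ s : ℝ, 0 < s → HasDerivAt Φ (Φ' s) s)
    (hcont : ContinuousOn Φ' (Ioi (0 : ℝ)))
    (hmono : ∀ s S : ℝ, 0 < s → s < S →
      Φ' s / Real.sinh s ≤ Φ' S / Real.sinh S) :
    (∀ τ : ℝ, 1 < τ →
      HasDerivAt (fun σ => c * Φ (Lvar σ))
        (c * (τ ^ 2 - 1) ^ (-(1 / 2 : ℝ)) * Φ' (Lvar τ)) τ) ∧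
    (∀ τ₁ τ₂ : ℝ, 1 < τ₁ → τ₁ ≤ τ₂ →
      c * (τ₁ ^ 2 - 1) ^ (-(1 / 2 : ℝ)) * Φ' (Lvar τ₁) ≤
        c * (τ₂ ^ 2 - 1) ^ (-(1 / 2 : ℝ)) * Φ' (Lvar τ₂)) ∧
    ConvexOn ℝ (Ioi (1 : ℝ)) (fun σ => c * Φ (Lvar σ)) :=
  convexity_from_monotone_derivative_general Φ Φ' c hc hderiv hmono
end
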